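/- arXiv:1108.4207 — 3 statements merged into one kernel-verified Lean document; each statement's English description precedes it below -/
import Mathlib

section
/- Let g₊ and g₋ be nondegenerate symmetric bilinear forms of Lorentz signature on ℝ⁴, with null cones N(g₊) and N(g₋). If Γ ⊆ ℝ⁴ is a linear subspace contained in N(g₊) ∪ N(g₋), then dim Γ ≤ 1. -/
open Matrix Polynomial

/-- `g` has Lorentz signature: it is congruent to `diag(-1,1,1,1)` or `diag(1,-1,-1,-1)`. -/
def IsLorentz (g : Matrix (Fin 4) (Fin 4) ℝ) : Prop :=
  ∃ P : Matrix (Fin 4) (Fin 4) ℝ, IsUnit P.det ∧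
    (Pᵀ * g * P = Matrix.diagonal ![(-1 : ℝ), 1, 1, 1] ∨
     Pᵀ * g * P = Matrix.diagonal ![(1 : ℝ), -1, -1, -1])


lemma quad_alt {A B C A' B' C' : ℝ}
    (h : ∀ t : ℝ, (A + B*t + C*t^2) * (A' + B'*t + C'*t^2) = 0) :
    (A = 0 ∧ B = 0 ∧ C = 0) ∨ (A' = 0 ∧ B' = 0 ∧ C' = 0) := by
  set p : ℝ[X] := Polynomial.C A + Polynomial.C B * X + Polynomial.C C * X^2 with hp
  set q : ℝ[X] := Polynomial.C A' + Polynomial.C B' * X + Polynomial.C C' * X^2 with hq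
  have hpq : p * q = 0 := by
    apply Polynomial.funext
    intro t
    simp only [hp, hq, eval_mul, eval_add, eval_C, eval_mul, eval_pow, eval_X, eval_zero]
    exact h t
  rcases mul_eq_zero.mp hpq with h0 | h0
  · left
    refine ⟨?_, ?_, ?_⟩
    · have := congrArg (fun r => Polynomial.coeff r 0) h0; simpa [hp] using this
    · have := congrArg (fun r => Polynomial.coeff r 1) h0; simpa [hp] using this
    · have := congrArg (fun r => Polynomial.coeff r 2) h0; simpa [hp] using this
  · right
    refine ⟨?_, ?_, ?_⟩
    · have := congrArg (fun r => Polynomial.coeff r 0) h0; simpa [hq] using this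
    · have := congrArg (fun r => Polynomial.coeff r 1) h0; simpa [hq] using this
    · have := congrArg (fun r => Polynomial.coeff r 2) h0; simpa [hq] using this

lemma lorentz_pair (g : Matrix (Fin 4) (Fin 4) ℝ) (hL : IsLorentz g)
    (u v : Fin 4 → ℝ) (hu : u ⬝ᵥ g.mulVec u = 0) (hv : v ⬝ᵥ g.mulVec v = 0)
    (huv : u ⬝ᵥ g.mulVec v + v ⬝ᵥ g.mulVec u = 0) :
    ∃ s t : ℝ, (s ≠ 0 ∨ t ≠ 0) ∧ s • u + t • v = 0 := by
  obtain ⟨P, hPdet, hD⟩ := hL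
  have hP : IsUnit P := (Matrix.isUnit_iff_isUnit_det P).mpr hPdet
  set w : Fin 4 → ℝ := P⁻¹.mulVec u with hw
  set z : Fin 4 → ℝ := P⁻¹.mulVec v with hz
  have hPinv : P * P⁻¹ = 1 := Matrix.mul_nonsing_inv P hPdet
  have huw : u = P.mulVec w := by
    rw [hw, Matrix.mulVec_mulVec, hPinv, Matrix.one_mulVec]
  have hvz : v = P.mulVec z := by
    rw [hz, Matrix.mulVec_mulVec, hPinv, Matrix.one_mulVec]
  have transfer : ∀ a b : Fin 4 → ℝ,
      (P.mulVec a) ⬝ᵥ g.mulVec (P.mulVec b) = a ⬝ᵥ (Pᵀ * g * P).mulVec b := by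
    intro a b
    rw [← Matrix.mulVec_mulVec, ← Matrix.mulVec_mulVec, Matrix.dotProduct_mulVec a Pᵀ,
      Matrix.vecMul_transpose, Matrix.dotProduct_mulVec]
  -- get diagonal-form equations (up to global sign)
  have key : ∀ a b : Fin 4 → ℝ, (P.mulVec a) ⬝ᵥ g.mulVec (P.mulVec b) = 0 →
      -(a 0 * b 0) + a 1 * b 1 + a 2 * b 2 + a 3 * b 3 = 0 := by
    intro a b hab
    rw [transfer] at hab
    rcases hD with hD | hD <;> rw [hD] at hab <;>
      · simp [dotProduct, Matrix.mulVec_diagonal, Fin.sum_univ_four] at hab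
        linarith
  rw [huw] at hu huv
  rw [hvz] at hv huv
  have h1 := key _ _ hu
  have h2 := key _ _ hv
  have sqz : ∀ a b c : ℝ, a^2 + b^2 + c^2 = 0 → a = 0 ∧ b = 0 ∧ c = 0 := by
    intro a b c h
    refine ⟨pow_eq_zero_iff two_ne_zero |>.mp ?_, pow_eq_zero_iff two_ne_zero |>.mp ?_,
      pow_eq_zero_iff two_ne_zero |>.mp ?_⟩
    · exact le_antisymm (by nlinarith [sq_nonneg b, sq_nonneg c]) (sq_nonneg a)
    · exact le_antisymm (by nlinarith [sq_nonneg a, sq_nonneg c]) (sq_nonneg b)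
    · exact le_antisymm (by nlinarith [sq_nonneg a, sq_nonneg b]) (sq_nonneg c)
  have h3 : -(w 0 * z 0) + w 1 * z 1 + w 2 * z 2 + w 3 * z 3 = 0 := by
    apply key
    simp only [transfer] at huv ⊢
    have hb : z ⬝ᵥ (Pᵀ * g * P).mulVec w = w ⬝ᵥ (Pᵀ * g * P).mulVec z := by
      rcases hD with hD | hD <;> rw [hD] <;>
        simp [dotProduct, Matrix.mulVec_diagonal, Fin.sum_univ_four] <;> ring
    rw [hb] at huv
    linarith
  -- Cauchy–Schwarz equality argument
  have hT : (z 0 * w 1 - w 0 * z 1)^2 + (z 0 * w 2 - w 0 * z 2)^2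
      + (z 0 * w 3 - w 0 * z 3)^2 = 0 := by
    linear_combination z 0 ^ 2 * h1 + w 0 ^ 2 * h2 - 2 * w 0 * z 0 * h3
  obtain ⟨e1, e2, e3⟩ := sqz _ _ _ hT
  by_cases h0 : w 0 = 0 ∧ z 0 = 0
  · -- then w = 0, so u = 0
    have hs : w 1 ^ 2 + w 2 ^ 2 + w 3 ^ 2 = 0 := by
      linear_combination h1 + w 0 * h0.1
    obtain ⟨hw1, hw2, hw3⟩ := sqz _ _ _ hs
    have hwz : w = 0 := by
      funext i; fin_cases i <;> simp [h0.1, hw1, hw2, hw3]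
    refine ⟨1, 0, Or.inl one_ne_zero, ?_⟩
    rw [huw, hwz]
    simp
  · refine ⟨z 0, -(w 0), ?_, ?_⟩
    · rcases not_and_or.mp h0 with h | h
      · right; simpa using h
      · left; exact h
    · have hvec : z 0 • w + (-(w 0)) • z = 0 := by
        funext i
        fin_cases i
        · simp; ring
        · simp; linarith
        · simp; linarith
        · simp; linarith
      have hcalc : z 0 • u + (-(w 0)) • v = P.mulVec (z 0 • w + (-(w 0)) • z) := by
        rw [Matrix.mulVec_add, Matrix.mulVec_smul, Matrix.mulVec_smul, ← huw, ← hvz]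
      rw [hcalc, hvec]
      simp

theorem stmt3 (gp gm : Matrix (Fin 4) (Fin 4) ℝ)
    (hgp : gp.IsSymm) (hgm : gm.IsSymm)
    (hLp : IsLorentz gp) (hLm : IsLorentz gm)
    (Γ : Submodule ℝ (Fin 4 → ℝ))
    (hnull : ∀ v ∈ Γ, v ⬝ᵥ gp.mulVec v = 0 ∨ v ⬝ᵥ gm.mulVec v = 0) :
    Module.finrank ℝ Γ ≤ 1 := by
  by_contra hlt
  push_neg at hlt
  obtain ⟨f, hf⟩ := exists_linearIndependent_of_le_finrank (n := 2) hlt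
  have hf' : LinearIndependent ℝ (Γ.subtype ∘ f) :=
    hf.map' Γ.subtype Γ.ker_subtype
  set u : Fin 4 → ℝ := (f 0 : Fin 4 → ℝ) with hu
  set v : Fin 4 → ℝ := (f 1 : Fin 4 → ℝ) with hv
  have humem : u ∈ Γ := (f 0).2
  have hvmem : v ∈ Γ := (f 1).2
  have expand : ∀ (g : Matrix (Fin 4) (Fin 4) ℝ) (t : ℝ),
      (u + t • v) ⬝ᵥ g.mulVec (u + t • v)
        = u ⬝ᵥ g.mulVec u + (u ⬝ᵥ g.mulVec v + v ⬝ᵥ g.mulVec u) * t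
          + (v ⬝ᵥ g.mulVec v) * t ^ 2 := by
    intro g t
    simp only [Matrix.mulVec_add, Matrix.mulVec_smul, dotProduct_add, add_dotProduct,
      dotProduct_smul, smul_dotProduct, smul_eq_mul]
    ring
  have hprod : ∀ t : ℝ,
      (u ⬝ᵥ gp.mulVec u + (u ⬝ᵥ gp.mulVec v + v ⬝ᵥ gp.mulVec u) * t + (v ⬝ᵥ gp.mulVec v) * t ^ 2)
      * (u ⬝ᵥ gm.mulVec u + (u ⬝ᵥ gm.mulVec v + v ⬝ᵥ gm.mulVec u) * t + (v ⬝ᵥ gm.mulVec v) * t ^ 2)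
      = 0 := by
    intro t
    have hmem : u + t • v ∈ Γ := Γ.add_mem humem (Γ.smul_mem t hvmem)
    rcases hnull _ hmem with h | h
    · rw [← expand gp t, h, zero_mul]
    · rw [← expand gm t, h, mul_zero]
  have hdep : ∃ s t : ℝ, (s ≠ 0 ∨ t ≠ 0) ∧ s • u + t • v = 0 := by
    rcases quad_alt hprod with ⟨hA, hB, hC⟩ | ⟨hA, hB, hC⟩
    · exact lorentz_pair gp hLp u v hA hC hB
    · exact lorentz_pair gm hLm u v hA hC hB
  obtain ⟨s, t, hst, hzero⟩ := hdep
  have hcoef := Fintype.linearIndependent_iff.mp hf' ![s, t] ?_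
  · rcases hst with h | h
    · exact h (hcoef 0)
    · exact h (hcoef 1)
  · rw [Fin.sum_univ_two]
    simp only [Matrix.cons_val_zero, Matrix.cons_val_one, Matrix.head_cons, Function.comp_apply]
    exact hzero
end

section
/- Suppose g₊, g₋, h₊, h₋ are nondegenerate symmetric bilinear forms of Lorentz signature on ℝ⁴ and C (g₊(ξ,ξ))(g₋(ξ,ξ)) = C' (h₊(ξ,ξ))(h₋(ξ,ξ)) as polynomials in ξ, for nonzero real constants C, C'. Then there exist nonzero constants C₊, C₋ ∈ ℝ such that either g₊ = C₊ h₊ and g₋ = C₋ h₋, or g₊ = C₊ h₋ and g₋ = C₋ h₊. -/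
open Matrix

namespace Stmt8Aux

open MvPolynomial

noncomputable section

def eta : Matrix (Fin 4) (Fin 4) ℝ := Matrix.diagonal ![(-1 : ℝ), 1, 1, 1]

variable {R : Type*} [CommRing R]

lemma qf_apply (g : Matrix (Fin 4) (Fin 4) R) (ξ : Fin 4 → R) :
    ξ ⬝ᵥ g.mulVec ξ = ∑ i, ∑ j, ξ i * (g i j * ξ j) := by
  simp [dotProduct, mulVec, Finset.mul_sum]

def quad (g : Matrix (Fin 4) (Fin 4) R) : MvPolynomial (Fin 4) R :=
  ∑ i, ∑ j, MvPolynomial.C (g i j) * X i * X j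

lemma eval_quad (g : Matrix (Fin 4) (Fin 4) R) (ξ : Fin 4 → R) :
    eval ξ (quad g) = ξ ⬝ᵥ g.mulVec ξ := by
  rw [qf_apply, quad, map_sum]
  refine Finset.sum_congr rfl fun i _ => ?_
  rw [map_sum]
  refine Finset.sum_congr rfl fun j _ => ?_
  simp; ring

lemma map_quad {S : Type*} [CommRing S] (f : R →+* S) (g : Matrix (Fin 4) (Fin 4) R) :
    MvPolynomial.map f (quad g) = quad (g.map f) := by
  simp [quad, Matrix.map_apply]

lemma quad_smul (c : R) (g : Matrix (Fin 4) (Fin 4) R) :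
    quad (c • g) = MvPolynomial.C c * quad g := by
  simp [quad, Finset.mul_sum, mul_assoc]

lemma quad_ext {g h : Matrix (Fin 4) (Fin 4) ℝ} (hg : g.IsSymm) (hh : h.IsSymm)
    (H : ∀ ξ : Fin 4 → ℝ, ξ ⬝ᵥ g.mulVec ξ = ξ ⬝ᵥ h.mulVec ξ) : g = h := by
  ext i j
  have key : ∀ (A : Matrix (Fin 4) (Fin 4) ℝ) (k l : Fin 4),
      (Pi.single k 1 + Pi.single l 1) ⬝ᵥ A.mulVec (Pi.single k 1 + Pi.single l 1)
        = A k k + A k l + A l k + A l l := by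
    intro A k l
    simp [Matrix.mulVec_add, dotProduct_add, add_dotProduct, Matrix.mulVec_single,
      dotProduct, Pi.single_apply]
    simp [add_mul, mul_add, Finset.sum_add_distrib, ite_mul]
    ring
  have hd : ∀ k, g k k = h k k := by
    intro k
    have := H (Pi.single k 1)
    simpa [Matrix.mulVec_single, dotProduct, Pi.single_apply, Finset.sum_ite_eq'] using this
  have h2 := H (Pi.single i 1 + Pi.single j 1)
  rw [key, key] at h2
  have hgij : g j i = g i j := by have := congrFun (congrFun hg i) j; simpa [Matrix.transpose_apply] using this
  have hhij : h j i = h i j := by have := congrFun (congrFun hh i) j; simpa [Matrix.transpose_apply] using this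
  have := hd i; have := hd j
  linarith [hgij, hhij]

lemma qf_congr (P g : Matrix (Fin 4) (Fin 4) R) (ξ : Fin 4 → R) :
    ξ ⬝ᵥ (Pᵀ * g * P).mulVec ξ = (P *ᵥ ξ) ⬝ᵥ g.mulVec (P *ᵥ ξ) := by
  rw [← Matrix.mulVec_mulVec, ← Matrix.mulVec_mulVec, Matrix.dotProduct_mulVec,
    Matrix.vecMul_transpose]

lemma congr_isSymm {P g : Matrix (Fin 4) (Fin 4) R} (hg : g.IsSymm) :
    (Pᵀ * g * P).IsSymm := by
  unfold Matrix.IsSymm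
  rw [Matrix.transpose_mul, Matrix.transpose_mul, Matrix.transpose_transpose, hg.eq,
    Matrix.mul_assoc]

lemma congr_cancel {P A B : Matrix (Fin 4) (Fin 4) ℝ} (hP : IsUnit P.det)
    (h : Pᵀ * A * P = Pᵀ * B * P) : A = B := by
  letI := P.invertibleOfIsUnitDet hP
  letI : Invertible Pᵀ := Matrix.invertibleTranspose P
  have := congrArg (fun M => (⅟(Pᵀ) * M) * ⅟P) h
  simpa [Matrix.mul_assoc] using this

lemma rank1 (p q r s : ℂ) (h : p * s = q * r) :
    ∃ a b c d : ℂ, a * c = p ∧ a * d = q ∧ b * c = r ∧ b * d = s := by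
  by_cases hp : p = 0
  · by_cases hq : q = 0
    · exact ⟨0, 1, r, s, by simp [hp], by simp [hq], by ring, by ring⟩
    · have hr : r = 0 := by
        rcases mul_eq_zero.mp (by rw [← h, hp, zero_mul]) with h' | h'
        · exact absurd h' hq
        · exact h'
      exact ⟨1, s / q, 0, q, by simp [hp], by ring, by simp [hr], by field_simp⟩
  · refine ⟨p, r, 1, q / p, by ring, by field_simp, by ring, ?_⟩
    field_simp
    rw [mul_comm r q, ← h]

lemma qf_eta (ξ : Fin 4 → ℝ) :
    ξ ⬝ᵥ eta.mulVec ξ = -(ξ 0 * ξ 0) + ξ 1 * ξ 1 + ξ 2 * ξ 2 + ξ 3 * ξ 3 := by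
  rw [qf_apply]
  simp [eta, Matrix.diagonal_apply, Fin.sum_univ_four]

lemma qf_etaC (ξ : Fin 4 → ℂ) :
    ξ ⬝ᵥ (eta.map (algebraMap ℝ ℂ)).mulVec ξ
      = -(ξ 0 * ξ 0) + ξ 1 * ξ 1 + ξ 2 * ξ 2 + ξ 3 * ξ 3 := by
  rw [qf_apply]
  simp [eta, Matrix.diagonal_apply, Matrix.map_apply, Fin.sum_univ_four,
    apply_ite (algebraMap ℝ ℂ)]

lemma qf_coe (g : Matrix (Fin 4) (Fin 4) ℝ) (ξ : Fin 4 → ℝ) :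
    (fun i => (ξ i : ℂ)) ⬝ᵥ (g.map (algebraMap ℝ ℂ)).mulVec (fun i => (ξ i : ℂ))
      = ((ξ ⬝ᵥ g.mulVec ξ : ℝ) : ℂ) := by
  rw [qf_apply, qf_apply]
  push_cast
  simp [Matrix.map_apply]

lemma quad_eta_ne : quad eta ≠ 0 := by
  intro h
  have := congrArg (eval ![(0:ℝ),1,0,0]) h
  rw [eval_quad, qf_eta] at this
  norm_num at this
  simp [show ![(0:ℝ),1,0,0] 2 = 0 from rfl, show ![(0:ℝ),1,0,0] 3 = 0 from rfl] at this

lemma lorentz_det_ne {g : Matrix (Fin 4) (Fin 4) ℝ} (h : IsLorentz g) : g.det ≠ 0 := by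
  obtain ⟨P, hP, hc⟩ := h
  have hd : (Pᵀ * g * P).det = P.det * g.det * P.det := by
    rw [Matrix.det_mul, Matrix.det_mul, Matrix.det_transpose]
  have hm1 : (Pᵀ * g * P).det = -1 := by
    rcases hc with h' | h' <;> rw [h'] <;>
      simp [Matrix.det_diagonal, Fin.prod_univ_four]
  intro h0
  rw [hd, h0] at hm1
  simp at hm1

def Phi (w : Fin 4 → ℂ) : Fin 4 → ℂ :=
  ![w 0 * w 2 + w 1 * w 3, w 0 * w 3 + w 1 * w 2,
    Complex.I * (w 1 * w 2 - w 0 * w 3), w 0 * w 2 - w 1 * w 3]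

lemma phi_null (w : Fin 4 → ℂ) :
    (Phi w) ⬝ᵥ (eta.map (algebraMap ℝ ℂ)).mulVec (Phi w) = 0 := by
  rw [qf_etaC]
  simp only [Phi, Matrix.cons_val_zero, Matrix.cons_val_one, Matrix.head_cons,
    Matrix.cons_val_two, Matrix.tail_cons, Matrix.cons_val_three]
  linear_combination (w 1 * w 2 - w 0 * w 3) ^ 2 * Complex.I_mul_I

lemma phi_surj (v : Fin 4 → ℂ)
    (hv : v 0 * v 0 = v 1 * v 1 + v 2 * v 2 + v 3 * v 3) : ∃ w, Phi w = v := by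
  obtain ⟨a, b, c, d, h1, h2, h3, h4⟩ :=
    rank1 ((v 0 + v 3) / 2) ((v 1 + Complex.I * v 2) / 2)
      ((v 1 - Complex.I * v 2) / 2) ((v 0 - v 3) / 2)
      (by linear_combination hv / 4 + (v 2 * v 2 / 4) * Complex.I_mul_I)
  refine ⟨![a, b, c, d], ?_⟩
  have e0 : Phi ![a,b,c,d] 0 = v 0 := by simp [Phi]; linear_combination h1 + h4
  have e1 : Phi ![a,b,c,d] 1 = v 1 := by simp [Phi]; linear_combination h2 + h3
  have e2 : Phi ![a,b,c,d] 2 = v 2 := by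
    simp [Phi]
    linear_combination Complex.I * h3 - Complex.I * h2 - v 2 * Complex.I_mul_I
  have e3 : Phi ![a,b,c,d] 3 = v 3 := by simp [Phi]; linear_combination h1 - h4
  funext i
  fin_cases i
  · exact e0
  · exact e1
  · exact e2
  · exact e3

lemma qf4 {g : Matrix (Fin 4) (Fin 4) ℝ} (hg : g.IsSymm) (t x y z : ℝ) :
    (![t, x, y, z]) ⬝ᵥ g.mulVec ![t, x, y, z] =
      g 0 0 * (t * t) + g 1 1 * (x * x) + g 2 2 * (y * y) + g 3 3 * (z * z)
      + 2 * (g 0 1 * (t * x)) + 2 * (g 0 2 * (t * y)) + 2 * (g 0 3 * (t * z))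
      + 2 * (g 1 2 * (x * y)) + 2 * (g 1 3 * (x * z)) + 2 * (g 2 3 * (y * z)) := by
  have hsym : ∀ i j, g j i = g i j := fun i j => by
    have := congrFun (congrFun hg i) j; simpa using this
  rw [qf_apply]
  simp only [Fin.sum_univ_four, Matrix.cons_val_zero, Matrix.cons_val_one, Matrix.head_cons,
    Matrix.cons_val_two, Matrix.tail_cons, Matrix.cons_val_three]
  rw [hsym 0 1, hsym 0 2, hsym 0 3, hsym 1 2, hsym 1 3, hsym 2 3]
  ring

lemma lemA {g : Matrix (Fin 4) (Fin 4) ℝ} (hg : g.IsSymm)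
    (H : ∀ ξ : Fin 4 → ℝ, ξ ⬝ᵥ eta.mulVec ξ = 0 → ξ ⬝ᵥ g.mulVec ξ = 0) :
    g = (-(g 0 0)) • eta := by
  have hsym : ∀ i j, g j i = g i j := fun i j => by
    have := congrFun (congrFun hg i) j; simpa using this
  set s := Real.sqrt 2 with hs
  have hs2 : s * s = 2 := Real.mul_self_sqrt (by norm_num)
  have null : ∀ t x y z : ℝ, -(t*t) + x*x + y*y + z*z = 0 →
      (![t,x,y,z]) ⬝ᵥ g.mulVec ![t,x,y,z] = 0 := by
    intro t x y z h
    apply H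
    rw [qf_eta]
    simpa using h
  have h1 := null 1 1 0 0 (by ring)
  have h2 := null 1 (-1) 0 0 (by ring)
  have h3 := null 1 0 1 0 (by ring)
  have h4 := null 1 0 (-1) 0 (by ring)
  have h5 := null 1 0 0 1 (by ring)
  have h6 := null 1 0 0 (-1) (by ring)
  rw [qf4 hg] at h1 h2 h3 h4 h5 h6
  have e01 : g 0 1 = 0 := by linarith [h1, h2]
  have e02 : g 0 2 = 0 := by linarith [h3, h4]
  have e03 : g 0 3 = 0 := by linarith [h5, h6]
  have e11 : g 1 1 = -(g 0 0) := by linarith [h1, h2]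
  have e22 : g 2 2 = -(g 0 0) := by linarith [h3, h4]
  have e33 : g 3 3 = -(g 0 0) := by linarith [h5, h6]
  have h7 := null s 1 1 0 (by linear_combination -hs2)
  have h8 := null s 1 0 1 (by linear_combination -hs2)
  have h9 := null s 0 1 1 (by linear_combination -hs2)
  rw [qf4 hg] at h7 h8 h9
  rw [hs2] at h7 h8 h9
  rw [e01, e02, e03, e11, e22, e33] at h7 h8 h9
  have e12 : g 1 2 = 0 := by linarith [h7]
  have e13 : g 1 3 = 0 := by linarith [h8]
  have e23 : g 2 3 = 0 := by linarith [h9]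
  funext i j
  fin_cases i <;> fin_cases j <;>
    simp [eta, Matrix.diagonal_apply, Matrix.smul_apply, hsym 0 1, hsym 0 2, hsym 0 3,
      hsym 1 2, hsym 1 3, hsym 2 3, e01, e02, e03, e11, e22, e33, e12, e13, e23]

lemma cancel_step {A B : Matrix (Fin 4) (Fin 4) ℝ} (hA : A.IsSymm) (hB : B.IsSymm)
    {a b : ℝ} (ha : a ≠ 0)
    (hpoly : MvPolynomial.C a * (quad eta * quad A) = MvPolynomial.C b * (quad eta * quad B)) :
    A = (b / a) • B := by
  have key : quad eta * (MvPolynomial.C a * quad A - MvPolynomial.C b * quad B) = 0 := by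
    linear_combination hpoly
  rcases mul_eq_zero.mp key with h | h
  · exact absurd h quad_eta_ne
  · have h2 : MvPolynomial.C a * quad A = MvPolynomial.C b * quad B := by
      linear_combination h
    apply quad_ext hA (hB.smul _)
    intro ξ
    have := congrArg (eval ξ) h2
    simp only [_root_.map_mul, eval_C, eval_quad] at this
    rw [Matrix.smul_mulVec, dotProduct_smul, smul_eq_mul]
    field_simp
    linarith [this]

def Phip : Fin 4 → MvPolynomial (Fin 4) ℂ :=
  ![X 0 * X 2 + X 1 * X 3, X 0 * X 3 + X 1 * X 2,
    MvPolynomial.C Complex.I * (X 1 * X 2 - X 0 * X 3), X 0 * X 2 - X 1 * X 3]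

lemma eval_Phip (w : Fin 4 → ℂ) : (fun i => eval w (Phip i)) = Phi w := by
  funext i
  fin_cases i <;> simp [Phip, Phi]

lemma evalbind (g : Matrix (Fin 4) (Fin 4) ℂ) (w : Fin 4 → ℂ) :
    eval w (bind₁ Phip (quad g)) = (Phi w) ⬝ᵥ g.mulVec (Phi w) := by
  have h1 : eval w (bind₁ Phip (quad g)) = aeval (fun i => aeval w (Phip i)) (quad g) := by
    rw [← aeval_bind₁]; rfl
  rw [h1]
  have h2 : (aeval (fun i => (aeval w) (Phip i)) (quad g) : ℂ)
      = eval (fun i => eval w (Phip i)) (quad g) := rfl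
  rw [h2, eval_Phip, eval_quad]

lemma vanish_eta {A : Matrix (Fin 4) (Fin 4) ℝ} (hAs : A.IsSymm)
    (h0 : bind₁ Phip (quad (A.map (algebraMap ℝ ℂ))) = 0) : A = (-(A 0 0)) • eta := by
  apply lemA hAs
  intro ξ hξ
  rw [qf_eta] at hξ
  have hnull : ξ 0 * ξ 0 = ξ 1 * ξ 1 + ξ 2 * ξ 2 + ξ 3 * ξ 3 := by linarith
  have hnullC : (ξ 0 : ℂ) * (ξ 0 : ℂ)
      = (ξ 1 : ℂ) * (ξ 1 : ℂ) + (ξ 2 : ℂ) * (ξ 2 : ℂ) + (ξ 3 : ℂ) * (ξ 3 : ℂ) := by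
    exact_mod_cast hnull
  obtain ⟨w, hw⟩ := phi_surj (fun i => (ξ i : ℂ)) hnullC
  have h := congrArg (eval w) h0
  rw [evalbind, hw, qf_coe, map_zero] at h
  exact_mod_cast h

lemma det_congr_ne {P g : Matrix (Fin 4) (Fin 4) ℝ} (h1 : P.det ≠ 0) (h2 : g.det ≠ 0) :
    (Pᵀ * g * P).det ≠ 0 := by
  rw [Matrix.det_mul, Matrix.det_mul, Matrix.det_transpose]
  exact mul_ne_zero (mul_ne_zero h1 h2) h1

end

end Stmt8Aux

open Stmt8Aux MvPolynomial in
theorem stmt8 (gp gm hp hm : Matrix (Fin 4) (Fin 4) ℝ)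
    (hgp : gp.IsSymm) (hgm : gm.IsSymm) (hhp : hp.IsSymm) (hhm : hm.IsSymm)
    (hLgp : IsLorentz gp) (hLgm : IsLorentz gm) (hLhp : IsLorentz hp) (hLhm : IsLorentz hm)
    (C C' : ℝ) (hC : C ≠ 0) (hC' : C' ≠ 0)
    (heq : ∀ ξ : Fin 4 → ℝ,
      C * ((ξ ⬝ᵥ gp.mulVec ξ) * (ξ ⬝ᵥ gm.mulVec ξ)) =
      C' * ((ξ ⬝ᵥ hp.mulVec ξ) * (ξ ⬝ᵥ hm.mulVec ξ))) :
    ∃ Cp Cm : ℝ, Cp ≠ 0 ∧ Cm ≠ 0 ∧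
      ((gp = Cp • hp ∧ gm = Cm • hm) ∨ (gp = Cp • hm ∧ gm = Cm • hp)) := by
  obtain ⟨P, hPdet, hPcase⟩ := hLhp
  obtain ⟨ε, hεpm, hp'eq⟩ : ∃ ε : ℝ, (ε = 1 ∨ ε = -1) ∧ Pᵀ * hp * P = ε • eta := by
    rcases hPcase with h | h
    · exact ⟨1, Or.inl rfl, by rw [h]; simp [eta]⟩
    · have hd : Matrix.diagonal ![(1:ℝ),-1,-1,-1] = (-1 : ℝ) • eta := by
        ext i j
        fin_cases i <;> fin_cases j <;> simp [eta, Matrix.diagonal_apply]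
      exact ⟨-1, Or.inr rfl, by rw [h, hd]⟩
  have hεne : ε ≠ 0 := by rcases hεpm with h | h <;> rw [h] <;> norm_num
  have hεsq : ε * ε = 1 := by rcases hεpm with h | h <;> rw [h] <;> norm_num
  have hPdet0 : P.det ≠ 0 := hPdet.ne_zero
  set gp' := Pᵀ * gp * P with hgp'def
  set gm' := Pᵀ * gm * P with hgm'def
  set hm' := Pᵀ * hm * P with hhm'def
  have hgp's : gp'.IsSymm := congr_isSymm hgp
  have hgm's : gm'.IsSymm := congr_isSymm hgm
  have hhm's : hm'.IsSymm := congr_isSymm hhm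
  have heq' : ∀ ξ : Fin 4 → ℝ,
      C * ((ξ ⬝ᵥ gp'.mulVec ξ) * (ξ ⬝ᵥ gm'.mulVec ξ)) =
      (C' * ε) * ((ξ ⬝ᵥ eta.mulVec ξ) * (ξ ⬝ᵥ hm'.mulVec ξ)) := by
    intro ξ
    have h := heq (P *ᵥ ξ)
    rw [← qf_congr P gp ξ, ← qf_congr P gm ξ, ← qf_congr P hp ξ, ← qf_congr P hm ξ] at h
    rw [hp'eq, Matrix.smul_mulVec, dotProduct_smul, smul_eq_mul] at h
    linear_combination h
  have hpoly : MvPolynomial.C C * (quad gp' * quad gm')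
      = MvPolynomial.C (C' * ε) * (quad eta * quad hm') := by
    apply MvPolynomial.funext
    intro ξ
    simp only [_root_.map_mul, eval_C, eval_quad]
    exact heq' ξ
  have hpolyC : MvPolynomial.C (algebraMap ℝ ℂ C)
        * (quad (gp'.map (algebraMap ℝ ℂ)) * quad (gm'.map (algebraMap ℝ ℂ)))
      = MvPolynomial.C (algebraMap ℝ ℂ (C' * ε))
        * (quad (eta.map (algebraMap ℝ ℂ)) * quad (hm'.map (algebraMap ℝ ℂ))) := by
    have h := congrArg (MvPolynomial.map (algebraMap ℝ ℂ)) hpoly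
    simpa only [_root_.map_mul, MvPolynomial.map_C, map_quad] using h
  have heqC : ∀ ξ : Fin 4 → ℂ,
      (algebraMap ℝ ℂ C) * ((ξ ⬝ᵥ (gp'.map (algebraMap ℝ ℂ)).mulVec ξ)
          * (ξ ⬝ᵥ (gm'.map (algebraMap ℝ ℂ)).mulVec ξ))
      = (algebraMap ℝ ℂ (C' * ε)) * ((ξ ⬝ᵥ (eta.map (algebraMap ℝ ℂ)).mulVec ξ)
          * (ξ ⬝ᵥ (hm'.map (algebraMap ℝ ℂ)).mulVec ξ)) := by
    intro ξ
    have h := congrArg (eval ξ) hpolyC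
    simpa only [_root_.map_mul, eval_C, eval_quad] using h
  have hCne : (algebraMap ℝ ℂ C) ≠ 0 := by
    simpa using hC
  have hprod : (bind₁ Phip (quad (gp'.map (algebraMap ℝ ℂ))))
      * (bind₁ Phip (quad (gm'.map (algebraMap ℝ ℂ)))) = 0 := by
    apply MvPolynomial.funext
    intro w
    rw [_root_.map_mul, map_zero, evalbind, evalbind]
    have h := heqC (Phi w)
    rw [phi_null w, zero_mul, mul_zero] at h
    exact (mul_eq_zero.mp h).resolve_left hCne
  rcases mul_eq_zero.mp hprod with hA | hA
  · -- gp' is proportional to eta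
    have hgp'eta := vanish_eta hgp's hA
    set α := -(gp' 0 0) with hαdef
    have hα : α ≠ 0 := by
      intro h0
      have hz : gp' = 0 := by rw [hgp'eta, h0, zero_smul]
      have hdet : gp'.det ≠ 0 := det_congr_ne hPdet0 (lorentz_det_ne hLgp)
      rw [hz] at hdet
      simp at hdet
    have hpoly2 : MvPolynomial.C (C * α) * (quad eta * quad gm')
        = MvPolynomial.C (C' * ε) * (quad eta * quad hm') := by
      have hq : quad gp' = MvPolynomial.C α * quad eta := by
        rw [hgp'eta, quad_smul]
      calc MvPolynomial.C (C * α) * (quad eta * quad gm')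
          = MvPolynomial.C C * ((MvPolynomial.C α * quad eta) * quad gm') := by
            rw [_root_.map_mul]; ring
        _ = MvPolynomial.C C * (quad gp' * quad gm') := by rw [hq]
        _ = MvPolynomial.C (C' * ε) * (quad eta * quad hm') := hpoly
    have hgm'eq := cancel_step hgm's hhm's (mul_ne_zero hC hα) hpoly2
    have hgp_fin : gp = (α * ε) • hp := by
      apply congr_cancel hPdet
      have h1 : Pᵀ * ((α * ε) • hp) * P = (α * ε) • (Pᵀ * hp * P) := by
        rw [Matrix.mul_smul, Matrix.smul_mul]
      rw [h1, hp'eq, smul_smul, mul_assoc α ε ε, hεsq, mul_one]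
      exact hgp'eta
    have hgm_fin : gm = ((C' * ε) / (C * α)) • hm := by
      apply congr_cancel hPdet
      have h1 : Pᵀ * (((C' * ε) / (C * α)) • hm) * P = ((C' * ε) / (C * α)) • hm' := by
        rw [Matrix.mul_smul, Matrix.smul_mul, hhm'def]
      rw [h1]
      exact hgm'eq
    exact ⟨α * ε, (C' * ε) / (C * α), mul_ne_zero hα hεne,
      div_ne_zero (mul_ne_zero hC' hεne) (mul_ne_zero hC hα), Or.inl ⟨hgp_fin, hgm_fin⟩⟩
  · -- gm' is proportional to eta
    have hgm'eta := vanish_eta hgm's hA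
    set α := -(gm' 0 0) with hαdef
    have hα : α ≠ 0 := by
      intro h0
      have hz : gm' = 0 := by rw [hgm'eta, h0, zero_smul]
      have hdet : gm'.det ≠ 0 := det_congr_ne hPdet0 (lorentz_det_ne hLgm)
      rw [hz] at hdet
      simp at hdet
    have hpoly2 : MvPolynomial.C (C * α) * (quad eta * quad gp')
        = MvPolynomial.C (C' * ε) * (quad eta * quad hm') := by
      have hq : quad gm' = MvPolynomial.C α * quad eta := by
        rw [hgm'eta, quad_smul]
      calc MvPolynomial.C (C * α) * (quad eta * quad gp')
          = MvPolynomial.C C * (quad gp' * (MvPolynomial.C α * quad eta)) := by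
            rw [_root_.map_mul]; ring
        _ = MvPolynomial.C C * (quad gp' * quad gm') := by rw [hq]
        _ = MvPolynomial.C (C' * ε) * (quad eta * quad hm') := hpoly
    have hgp'eq := cancel_step hgp's hhm's (mul_ne_zero hC hα) hpoly2
    have hgm_fin : gm = (α * ε) • hp := by
      apply congr_cancel hPdet
      have h1 : Pᵀ * ((α * ε) • hp) * P = (α * ε) • (Pᵀ * hp * P) := by
        rw [Matrix.mul_smul, Matrix.smul_mul]
      rw [h1, hp'eq, smul_smul, mul_assoc α ε ε, hεsq, mul_one]
      exact hgm'eta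
    have hgp_fin : gp = ((C' * ε) / (C * α)) • hm := by
      apply congr_cancel hPdet
      have h1 : Pᵀ * (((C' * ε) / (C * α)) • hm) * P = ((C' * ε) / (C * α)) • hm' := by
        rw [Matrix.mul_smul, Matrix.smul_mul, hhm'def]
      rw [h1]
      exact hgp'eq
    exact ⟨(C' * ε) / (C * α), α * ε, div_ne_zero (mul_ne_zero hC' hεne) (mul_ne_zero hC hα),
      mul_ne_zero hα hεne, Or.inr ⟨hgp_fin, hgm_fin⟩⟩
end

section
/- The quartic polynomial f(ξ) = ξ₀ξ₁ξ₂ξ₃ on ℝ⁴ cannot be written as the product of two quadratic forms of Lorentz signature: there do not exist Lorentz-signature symmetric bilinear forms g₊, g₋ on ℝ⁴ and a nonzero constant C with ξ₀ξ₁ξ₂ξ₃ = C·g₊(ξ,ξ)·g₋(ξ,ξ) for all ξ ∈ ℝ⁴. -/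
open Matrix

open Polynomial in
private lemma quad_expand (g : Matrix (Fin 4) (Fin 4) ℝ) (v w : Fin 4 → ℝ) (t : ℝ) :
    (fun i => w i + t * v i) ⬝ᵥ g.mulVec (fun i => w i + t * v i)
      = (w ⬝ᵥ g.mulVec w) + ((w ⬝ᵥ g.mulVec v) + (v ⬝ᵥ g.mulVec w)) * t
        + (v ⬝ᵥ g.mulVec v) * t ^ 2 := by
  simp [Matrix.mulVec, dotProduct, Fin.sum_univ_four]; ring

open Polynomial in
/-- If the product of the two quadratic forms vanishes on the hyperplane ξ₀ = 0,
one of them vanishes on the whole hyperplane. -/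
private lemma dichotomy (gp gm : Matrix (Fin 4) (Fin 4) ℝ)
    (H : ∀ ξ : Fin 4 → ℝ, ξ 0 = 0 → (ξ ⬝ᵥ gp.mulVec ξ) * (ξ ⬝ᵥ gm.mulVec ξ) = 0) :
    (∀ ξ : Fin 4 → ℝ, ξ 0 = 0 → ξ ⬝ᵥ gp.mulVec ξ = 0) ∨
    (∀ ξ : Fin 4 → ℝ, ξ 0 = 0 → ξ ⬝ᵥ gm.mulVec ξ = 0) := by
  by_contra hc
  push_neg at hc
  obtain ⟨⟨v, hv0, hv⟩, ⟨w, hw0, hw⟩⟩ := hc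
  set p : ℝ[X] := C (w ⬝ᵥ gp.mulVec w) + C ((w ⬝ᵥ gp.mulVec v) + (v ⬝ᵥ gp.mulVec w)) * X
      + C (v ⬝ᵥ gp.mulVec v) * X ^ 2 with hp
  set q : ℝ[X] := C (w ⬝ᵥ gm.mulVec w) + C ((w ⬝ᵥ gm.mulVec v) + (v ⬝ᵥ gm.mulVec w)) * X
      + C (v ⬝ᵥ gm.mulVec v) * X ^ 2 with hq
  have hpq : p * q = 0 := by
    apply Polynomial.funext
    intro t
    have h0 : (fun i => w i + t * v i) 0 = 0 := by simp [hv0, hw0]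
    have := H (fun i => w i + t * v i) h0
    rw [quad_expand, quad_expand] at this
    simp [hp, hq, this]
  have hp0 : p ≠ 0 := fun h => hv (by
    have := congrArg (fun r => Polynomial.coeff r 2) h
    simpa [hp, Polynomial.coeff_add, Polynomial.coeff_C_mul] using this)
  have hq0 : q ≠ 0 := fun h => hw (by
    have := congrArg (fun r => Polynomial.coeff r 0) h
    simpa [hq, Polynomial.coeff_add, Polynomial.coeff_C_mul] using this)
  exact mul_ne_zero hp0 hq0 hpq

private lemma lorentz_det_ne_zero (g : Matrix (Fin 4) (Fin 4) ℝ) (hL : IsLorentz g) :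
    g.det ≠ 0 := by
  obtain ⟨P, _, hc⟩ := hL
  intro h0
  rcases hc with hc | hc <;>
  · have := congrArg Matrix.det hc
    rw [Matrix.det_mul, Matrix.det_mul, Matrix.det_transpose, h0, Matrix.det_diagonal] at this
    simp [Fin.prod_univ_four] at this

private lemma block_det_zero (g : Matrix (Fin 4) (Fin 4) ℝ)
    (h11 : g 1 1 = 0) (h12 : g 1 2 = 0) (h13 : g 1 3 = 0)
    (h21 : g 2 1 = 0) (h22 : g 2 2 = 0) (h23 : g 2 3 = 0)
    (h31 : g 3 1 = 0) (h32 : g 3 2 = 0) (h33 : g 3 3 = 0) :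
    g.det = 0 := by
  simp [Matrix.det_succ_row_zero, Fin.sum_univ_succ, Fin.succ_zero_eq_one,
    Fin.succ_one_eq_two, show (Fin.succAbove 1 2 : Fin 4) = 3 from rfl,
    show (Fin.succAbove 2 2 : Fin 4) = 3 from rfl,
    show (Fin.succ 2 : Fin 4) = 3 from rfl,
    show (Fin.castSucc (2 : Fin 3) : Fin 4) = 2 by decide,
    h11, h12, h13, h21, h22, h23, h31, h32, h33]

/-- A symmetric Lorentz form cannot vanish identically on the hyperplane ξ₀ = 0. -/
private lemma vanish_contra (g : Matrix (Fin 4) (Fin 4) ℝ) (hs : g.IsSymm)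
    (hL : IsLorentz g) (h : ∀ ξ : Fin 4 → ℝ, ξ 0 = 0 → ξ ⬝ᵥ g.mulVec ξ = 0) : False := by
  have hsym : ∀ i j, g j i = g i j := fun i j => by
    have := congrFun (congrFun hs i) j
    simpa [Matrix.transpose_apply] using this
  have e1 := h ![0, 1, 0, 0] rfl
  have e2 := h ![0, 0, 1, 0] rfl
  have e3 := h ![0, 0, 0, 1] rfl
  have e12 := h ![0, 1, 1, 0] rfl
  have e13 := h ![0, 1, 0, 1] rfl
  have e23 := h ![0, 0, 1, 1] rfl
  simp [Matrix.mulVec, dotProduct, Fin.sum_univ_four] at e1 e2 e3 e12 e13 e23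
  have h11 : g 1 1 = 0 := by linarith
  have h22 : g 2 2 = 0 := by linarith
  have h33 : g 3 3 = 0 := by linarith
  have h12 : g 1 2 = 0 := by have := hsym 1 2; linarith
  have h13 : g 1 3 = 0 := by have := hsym 1 3; linarith
  have h23 : g 2 3 = 0 := by have := hsym 2 3; linarith
  exact lorentz_det_ne_zero g hL
    (block_det_zero g h11 h12 h13 (by rw [hsym 1 2, h12]) h22 h23
      (by rw [hsym 1 3, h13]) (by rw [hsym 2 3, h23]) h33)

theorem stmt9 :
    ¬ ∃ (gp gm : Matrix (Fin 4) (Fin 4) ℝ) (C : ℝ),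
      gp.IsSymm ∧ gm.IsSymm ∧ IsLorentz gp ∧ IsLorentz gm ∧ C ≠ 0 ∧
      ∀ ξ : Fin 4 → ℝ,
        ξ 0 * ξ 1 * ξ 2 * ξ 3 = C * ((ξ ⬝ᵥ gp.mulVec ξ) * (ξ ⬝ᵥ gm.mulVec ξ)) := by
  rintro ⟨gp, gm, C, hsp, hsm, hLp, hLm, hC, heq⟩
  have H : ∀ ξ : Fin 4 → ℝ, ξ 0 = 0 →
      (ξ ⬝ᵥ gp.mulVec ξ) * (ξ ⬝ᵥ gm.mulVec ξ) = 0 := by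
    intro ξ h0
    have h1 : (0 : ℝ) = C * ((ξ ⬝ᵥ gp.mulVec ξ) * (ξ ⬝ᵥ gm.mulVec ξ)) := by
      simpa [h0] using heq ξ
    exact (mul_eq_zero.mp h1.symm).resolve_left hC
  rcases dichotomy gp gm H with h | h
  · exact vanish_contra gp hsp hLp h
  · exact vanish_contra gm hsm hLm h
end
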